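/- arXiv:1409.3113 — 3 statements merged into one kernel-verified Lean document; each statement's English description precedes it below -/
import Mathlib

section
/- Let 0 < λ ≤ 1. The Borel probability mass function p(n) = (λn)^{n-1}/n! · e^{-λn} for n ∈ ℕ, n ≥ 1, satisfies the convolution recursion p(n+1) = ∑_{k=1}^n (λ^k/k! · e^{-λ}) · ∑_{(n_1,...,n_k) ∈ ℕ^k, n_i ≥ 1, n_1+⋯+n_k = n} ∏_{ℓ=1}^k p(n_ℓ) for all n ≥ 1. -/
/-!
Write `B m = m ^ (m - 1) / m!` (`treeWeight m`) for the coefficients of the tree function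
`T(x) = ∑ B m x ^ m`. Since `λ p(m) = (λ e^{-λ}) ^ m B m`, the recursion is the coefficient identity
`[x^(n+1)] T = [x^n] exp T`, i.e. `T = x exp T`. Comparing coefficients in
`x (exp T)' = x T' exp T` gives `n [x^n] exp T = ∑_{i+j=n} i B i [x^j] exp T`, so by strong
induction it suffices that `j ↦ B (j + 1)` satisfies the same convolution. After clearing
factorials, that convolution is the `y`-derivative at `y = 0` of Abel's identity
`∑ C(n,k) (k+1)^(k-1) (y+n-k)^(n-k) = (y+n+1)^n`. Abel's identity follows by induction on `n`:
both sides have the same derivative, and at `y = -(n+1)` the left side is an `n`-th finite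
difference of `x ↦ x^(n-1)`, hence `0`.
-/

open Finset
open scoped Nat

theorem sum_neg_one_pow_mul_choose_mul_pow_eq_zero {R : Type*} [CommRing R] {m n : ℕ}
    (h : m < n) (y : R) :
    ∑ k ∈ range (n + 1), (-1) ^ (n - k) * (n.choose k : R) * (y + k) ^ m = 0 := by
  have := congrFun (fwdDiff_iter_pow_eq_zero_of_lt (R := R) h) y
  rw [fwdDiff_iter_eq_sum_shift] at this
  simpa [zsmul_eq_mul] using this

noncomputable def abelSum (n : ℕ) (y : ℝ) : ℝ :=
  ∑ k ∈ range (n + 1), (n.choose k : ℝ) * (k + 1) ^ (k - 1) * (y + (n - k : ℕ)) ^ (n - k)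

theorem hasDerivAt_abelSum (n : ℕ) (y : ℝ) :
    HasDerivAt (abelSum n) (∑ k ∈ range (n + 1), (n.choose k : ℝ) * (k + 1) ^ (k - 1) *
      ((n - k : ℕ) * (y + (n - k : ℕ)) ^ (n - k - 1))) y := by
  unfold abelSum
  refine HasDerivAt.fun_sum fun k _ => HasDerivAt.const_mul _ ?_
  simpa using ((hasDerivAt_id y).add_const ((n - k : ℕ) : ℝ)).fun_pow (n - k)

theorem sum_deriv_abelSum_succ (n : ℕ) (y : ℝ) :
    ∑ k ∈ range (n + 2), ((n + 1).choose k : ℝ) * (k + 1) ^ (k - 1) *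
      ((n + 1 - k : ℕ) * (y + (n + 1 - k : ℕ)) ^ (n + 1 - k - 1))
      = (n + 1) * abelSum n (y + 1) := by
  rw [sum_range_succ, abelSum, mul_sum]
  simp only [Nat.sub_self, Nat.cast_zero, zero_mul, mul_zero, add_zero]
  refine sum_congr rfl fun k hk => ?_
  have hsub : n + 1 - k = n - k + 1 := by have := mem_range.mp hk; omega
  have hchoose : ((n + 1).choose k : ℝ) * (n + 1 - k : ℕ) = (n + 1) * n.choose k := by
    exact_mod_cast (Nat.choose_mul_succ_eq n k).symm.trans (mul_comm _ _)
  rw [hsub, Nat.cast_succ] at hchoose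
  rw [hsub, Nat.add_sub_cancel, Nat.cast_succ]
  linear_combination (k + 1 : ℝ) ^ (k - 1) * (y + 1 + (n - k : ℕ)) ^ (n - k) * hchoose

theorem abelSum_succ_neg_add_two (n : ℕ) : abelSum (n + 1) (-(n + 2)) = 0 := by
  rw [← sum_neg_one_pow_mul_choose_mul_pow_eq_zero (Nat.lt_succ_self n) (1 : ℝ), abelSum]
  refine sum_congr rfl fun k hk => ?_
  have hk : k ≤ n + 1 := Nat.lt_succ_iff.mp (mem_range.mp hk)
  have hbase : -((n : ℝ) + 2) + (n + 1 - k : ℕ) = -(1 + k) := by push_cast [hk]; ring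
  have hpow : ((k : ℝ) + 1) ^ (k - 1) * (1 + k) ^ (n + 1 - k) = (1 + k) ^ n := by
    rcases k with _ | j
    · simp
    · rw [add_comm (1 : ℝ), ← pow_add]; congr 1; omega
  rw [hbase, neg_pow, ← hpow]
  ring

theorem abelSum_eq (n : ℕ) (y : ℝ) : abelSum n y = (y + n + 1) ^ n := by
  induction n generalizing y with
  | zero => simp [abelSum]
  | succ n ih =>
    have hderiv (z : ℝ) :
        HasDerivAt (fun z => abelSum (n + 1) z - (z + ((n + 1 : ℕ) + 1)) ^ (n + 1)) 0 z := by
      have hF := hasDerivAt_abelSum (n + 1) z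
      rw [sum_deriv_abelSum_succ, ih] at hF
      have hG := ((hasDerivAt_id' z).add_const ((n + 1 : ℕ) + 1 : ℝ)).fun_pow (n + 1)
      refine (hF.fun_sub hG).congr_deriv ?_
      push_cast [Nat.add_sub_cancel]
      ring
    have hconst := is_const_of_deriv_eq_zero (fun z => (hderiv z).differentiableAt)
      (fun z => (hderiv z).deriv) y (-(n + 2))
    rw [abelSum_succ_neg_add_two] at hconst
    push_cast at hconst ⊢
    linear_combination hconst

def positiveAntidiagonalTuple (k n : ℕ) : Finset (Fin k → ℕ) :=
  (Nat.antidiagonalTuple k n).filter (fun f => ∀ i, 1 ≤ f i)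

@[simp]
theorem mem_positiveAntidiagonalTuple {k n : ℕ} {f : Fin k → ℕ} :
    f ∈ positiveAntidiagonalTuple k n ↔ ∑ i, f i = n ∧ ∀ i, 1 ≤ f i := by
  simp [positiveAntidiagonalTuple, Nat.mem_antidiagonalTuple]

theorem sum_positiveAntidiagonalTuple_succ {M : Type*} [AddCommMonoid M] (k n : ℕ)
    (F : ℕ → (Fin k → ℕ) → M) :
    ∑ f ∈ positiveAntidiagonalTuple (k + 1) n, F (f 0) (Fin.tail f)
      = ∑ p ∈ antidiagonal n with 1 ≤ p.1, ∑ g ∈ positiveAntidiagonalTuple k p.2, F p.1 g := by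
  rw [sum_sigma']
  refine sum_nbij' (fun f => ⟨(f 0, n - f 0), Fin.tail f⟩) (fun x => Fin.cons x.1.1 x.2)
    ?_ ?_ ?_ ?_ fun _ _ => rfl
  · intro f hf
    simp only [mem_sigma, mem_filter, HasAntidiagonal.mem_antidiagonal,
      mem_positiveAntidiagonalTuple] at hf ⊢
    rw [Fin.sum_univ_succ] at hf
    exact ⟨⟨by omega, hf.2 0⟩, by simp only [Fin.tail]; omega, fun i => hf.2 i.succ⟩
  · rintro ⟨⟨m, r⟩, g⟩ hx
    simp only [mem_sigma, mem_filter, HasAntidiagonal.mem_antidiagonal,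
      mem_positiveAntidiagonalTuple] at hx ⊢
    refine ⟨by rw [Fin.sum_univ_succ]; simp only [Fin.cons_zero, Fin.cons_succ]; omega, ?_⟩
    exact Fin.cases hx.1.2 fun i => by simpa using hx.2.2 i
  · intro f _
    exact Fin.cons_self_tail f
  · rintro ⟨⟨m, r⟩, g⟩ hx
    simp only [mem_sigma, mem_filter, HasAntidiagonal.mem_antidiagonal] at hx
    simp [← hx.1.1]

section powCoeff

variable {R : Type*} [CommSemiring R] (a : ℕ → R)

/-- `powCoeff a k n` is the coefficient of `x ^ n` in `(∑_{m ≥ 1} a m x ^ m) ^ k`, and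
`expCoeff a n` below is the coefficient of `x ^ n` in its exponential. -/
def powCoeff (k n : ℕ) : R :=
  ∑ f ∈ positiveAntidiagonalTuple k n, ∏ i, a (f i)

theorem powCoeff_zero_zero : powCoeff a 0 0 = 1 := by
  simp [powCoeff, positiveAntidiagonalTuple]

theorem powCoeff_zero_left {n : ℕ} (hn : n ≠ 0) : powCoeff a 0 n = 0 := by
  refine sum_eq_zero fun f hf => ?_
  simp only [mem_positiveAntidiagonalTuple, univ_eq_empty, sum_empty] at hf
  omega

theorem powCoeff_eq_zero_of_lt {k n : ℕ} (h : n < k) : powCoeff a k n = 0 := by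
  refine sum_eq_zero fun f hf => absurd h (not_lt.mpr ?_)
  rw [mem_positiveAntidiagonalTuple] at hf
  calc k = ∑ _i : Fin k, 1 := by simp
    _ ≤ ∑ i, f i := sum_le_sum fun i _ => hf.2 i
    _ = n := hf.1

theorem sum_apply_mul_prod_eq_sum_apply_zero_mul_prod (k n : ℕ) (ℓ : Fin (k + 1)) :
    ∑ f ∈ positiveAntidiagonalTuple (k + 1) n, (f ℓ : R) * ∏ i, a (f i)
      = ∑ f ∈ positiveAntidiagonalTuple (k + 1) n, (f 0 : R) * ∏ i, a (f i) := by
  have hmem {f : Fin (k + 1) → ℕ} (hf : f ∈ positiveAntidiagonalTuple (k + 1) n) :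
      f ∘ Equiv.swap 0 ℓ ∈ positiveAntidiagonalTuple (k + 1) n := by
    rw [mem_positiveAntidiagonalTuple] at hf ⊢
    exact ⟨(Equiv.sum_comp (Equiv.swap 0 ℓ) f).trans hf.1, fun i => hf.2 _⟩
  refine sum_nbij' (· ∘ Equiv.swap 0 ℓ) (· ∘ Equiv.swap 0 ℓ) (fun _ => hmem) (fun _ => hmem)
    (fun f _ => by ext; simp) (fun f _ => by ext; simp) fun f _ => ?_
  simp only [Function.comp_apply, Equiv.swap_apply_left]
  rw [← Equiv.prod_comp (Equiv.swap 0 ℓ) (fun i => a (f i))]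

theorem sum_apply_zero_mul_prod (k n : ℕ) :
    ∑ f ∈ positiveAntidiagonalTuple (k + 1) n, (f 0 : R) * ∏ i, a (f i)
      = ∑ p ∈ antidiagonal n, p.1 * a p.1 * powCoeff a k p.2 := by
  simp_rw [Fin.prod_univ_succ, ← mul_assoc]
  refine (sum_positiveAntidiagonalTuple_succ k n fun m g => (m : R) * a m * ∏ i, a (g i)).trans ?_
  simp_rw [← mul_sum]
  refine sum_filter_of_ne fun p _ hp => Nat.one_le_iff_ne_zero.mpr fun h0 => hp ?_
  simp [h0]

/-- The coefficient of `x ^ n` in `x (A ^ (k + 1))' = (k + 1) A ^ k (x A')`. -/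
theorem natCast_mul_powCoeff_succ (k n : ℕ) :
    n * powCoeff a (k + 1) n = (k + 1) * ∑ p ∈ antidiagonal n, p.1 * a p.1 * powCoeff a k p.2 := by
  have hsize : n * powCoeff a (k + 1) n
      = ∑ ℓ, ∑ f ∈ positiveAntidiagonalTuple (k + 1) n, (f ℓ : R) * ∏ i, a (f i) := by
    rw [sum_comm, powCoeff, mul_sum]
    refine sum_congr rfl fun f hf => ?_
    rw [← sum_mul, ← (mem_positiveAntidiagonalTuple.mp hf).1, Nat.cast_sum]
  simp_rw [hsize, sum_apply_mul_prod_eq_sum_apply_zero_mul_prod, sum_const, card_univ,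
    Fintype.card_fin, nsmul_eq_mul, sum_apply_zero_mul_prod]
  push_cast
  ring

end powCoeff

section expCoeff

variable {K : Type*} [Field K] (a : ℕ → K)

def expCoeff (n : ℕ) : K :=
  ∑ k ∈ range (n + 1), powCoeff a k n / k !

theorem expCoeff_eq_sum_range {n N : ℕ} (h : n < N) :
    expCoeff a n = ∑ k ∈ range N, powCoeff a k n / k ! := by
  refine sum_subset (range_subset_range.mpr h) fun k _ hk => ?_
  rw [powCoeff_eq_zero_of_lt a (by simpa using hk), zero_div]

theorem expCoeff_eq_sum_Icc {n : ℕ} (hn : n ≠ 0) :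
    expCoeff a n = ∑ k ∈ Icc 1 n, powCoeff a k n / k ! := by
  rw [expCoeff, range_eq_Ico, sum_eq_sum_Ico_succ_bot (by omega), zero_add,
    Ico_add_one_right_eq_Icc, powCoeff_zero_left a hn, zero_div, zero_add]

variable [CharZero K] in
theorem natCast_mul_expCoeff (n : ℕ) :
    n * expCoeff a n = ∑ p ∈ antidiagonal n, p.1 * a p.1 * expCoeff a p.2 := by
  have hhead : (n : K) * (powCoeff a 0 n / 0 !) = 0 := by
    rcases eq_or_ne n 0 with rfl | hn
    · simp
    · rw [powCoeff_zero_left a hn, zero_div, mul_zero]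
  have hstep (k : ℕ) : (n : K) * (powCoeff a (k + 1) n / (k + 1) !)
      = ∑ p ∈ antidiagonal n, p.1 * a p.1 * (powCoeff a k p.2 / k !) := by
    rw [← mul_div_assoc, natCast_mul_powCoeff_succ, Nat.factorial_succ, Nat.cast_mul,
      Nat.cast_succ, mul_div_mul_left _ _ (Nat.cast_add_one_ne_zero k), sum_div]
    simp_rw [mul_div_assoc]
  rw [expCoeff, mul_sum, sum_range_succ', hhead, add_zero]
  simp_rw [hstep]
  rw [sum_comm]
  refine sum_congr rfl fun p hp => ?_
  rw [← mul_sum]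
  rcases Nat.eq_zero_or_pos p.1 with h0 | hpos
  · simp [h0]
  · rw [expCoeff_eq_sum_range a (N := n) (by rw [HasAntidiagonal.mem_antidiagonal] at hp; omega)]

end expCoeff

noncomputable def treeWeight (n : ℕ) : ℝ := n ^ (n - 1) / n !

theorem treeWeight_succ (n : ℕ) : treeWeight (n + 1) = (n + 1) ^ (n - 1) / n ! := by
  rw [treeWeight, Nat.factorial_succ]
  rcases n with _ | n
  · simp
  · push_cast
    field_simp
    ring

theorem sum_antidiagonal_mul_treeWeight (n : ℕ) :
    ∑ p ∈ antidiagonal n, p.1 * treeWeight p.1 * treeWeight (p.2 + 1) = n * treeWeight (n + 1) := by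
  rcases n with _ | n
  · simp
  rw [← Nat.sum_antidiagonal_swap]
  simp only [Prod.fst_swap, Prod.snd_swap]
  rw [Nat.sum_antidiagonal_eq_sum_range_succ fun i j => (j : ℝ) * treeWeight j * treeWeight (i + 1)]
  have hterm : ∀ k ∈ range (n + 1 + 1),
      ((n + 1 - k : ℕ) : ℝ) * treeWeight (n + 1 - k) * treeWeight (k + 1)
        = ((n + 1).choose k : ℝ) * (k + 1) ^ (k - 1) *
            ((n + 1 - k : ℕ) * (0 + (n + 1 - k : ℕ)) ^ (n + 1 - k - 1)) / (n + 1)! := by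
    intro k hk
    have hk : k ≤ n + 1 := Nat.lt_succ_iff.mp (mem_range.mp hk)
    rw [treeWeight, treeWeight_succ, Nat.cast_choose ℝ hk, zero_add]
    field_simp
  rw [sum_congr rfl hterm, ← sum_div, sum_deriv_abelSum_succ, abelSum_eq, treeWeight_succ]
  push_cast
  ring

theorem expCoeff_treeWeight (n : ℕ) : expCoeff treeWeight n = treeWeight (n + 1) := by
  induction n using Nat.strong_induction_on with
  | _ n ih =>
    rcases eq_or_ne n 0 with rfl | hn
    · simp [expCoeff, powCoeff_zero_zero, treeWeight]
    refine mul_left_cancel₀ (Nat.cast_ne_zero.mpr hn) ?_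
    rw [natCast_mul_expCoeff, ← sum_antidiagonal_mul_treeWeight]
    refine sum_congr rfl fun p hp => ?_
    rcases Nat.eq_zero_or_pos p.1 with h0 | hpos
    · simp [h0]
    · rw [ih p.2 (by rw [HasAntidiagonal.mem_antidiagonal] at hp; omega)]

theorem mul_borel_eq (lam : ℝ) {m : ℕ} (hm : 1 ≤ m) :
    lam * ((lam * m) ^ (m - 1) / m ! * Real.exp (-(lam * m)))
      = (lam * Real.exp (-lam)) ^ m * treeWeight m := by
  obtain ⟨j, rfl⟩ := Nat.exists_eq_add_of_le' hm
  rw [treeWeight, show -(lam * (j + 1 : ℕ)) = (j + 1 : ℕ) * -lam by ring, Real.exp_nat_mul,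
    Nat.add_sub_cancel]
  ring

theorem pow_mul_prod_borel (lam : ℝ) {k n : ℕ} {f : Fin k → ℕ}
    (hf : f ∈ positiveAntidiagonalTuple k n) :
    lam ^ k * ∏ ℓ, (lam * f ℓ) ^ (f ℓ - 1) / (f ℓ)! * Real.exp (-(lam * f ℓ))
      = (lam * Real.exp (-lam)) ^ n * ∏ ℓ, treeWeight (f ℓ) := by
  rw [mem_positiveAntidiagonalTuple] at hf
  rw [← Fin.prod_const k lam, ← prod_mul_distrib]
  simp_rw [mul_borel_eq lam (hf.2 _), prod_mul_distrib, prod_pow_eq_pow_sum, hf.1]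

theorem stmt3_general (lam : ℝ) (n : ℕ) (hn : 1 ≤ n) :
    (lam * (n + 1)) ^ n / (n + 1).factorial * Real.exp (-(lam * (n + 1)))
    = ∑ k ∈ Finset.Icc 1 n, (lam ^ k / k.factorial * Real.exp (-lam)) *
        ∑ f ∈ (Finset.Nat.antidiagonalTuple k n).filter (fun f => ∀ i, 1 ≤ f i),
          ∏ ℓ, (lam * f ℓ) ^ (f ℓ - 1) / (f ℓ).factorial * Real.exp (-(lam * f ℓ)) := by
  have hlhs : (lam * (n + 1)) ^ n / (n + 1)! * Real.exp (-(lam * (n + 1)))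
      = Real.exp (-lam) * (lam * Real.exp (-lam)) ^ n * treeWeight (n + 1) := by
    rw [treeWeight, Nat.add_sub_cancel, mul_pow,
      show -(lam * (n + 1)) = (n : ℕ) * (-lam) + -lam by ring, Real.exp_add, Real.exp_nat_mul]
    push_cast
    ring
  rw [hlhs, ← expCoeff_treeWeight, expCoeff_eq_sum_Icc _ (Nat.one_le_iff_ne_zero.mp hn), mul_sum]
  refine sum_congr rfl fun k _ => ?_
  rw [powCoeff, sum_div, mul_sum, mul_sum]
  refine sum_congr rfl fun f hf => ?_
  linear_combination -(Real.exp (-lam) / k !) * pow_mul_prod_borel lam hf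

theorem stmt3 (lam : ℝ) (h0 : 0 < lam) (h1 : lam ≤ 1) (n : ℕ) (hn : 1 ≤ n) :
    (lam * (n + 1)) ^ n / (n + 1).factorial * Real.exp (-(lam * (n + 1)))
    = ∑ k ∈ Finset.Icc 1 n, (lam ^ k / k.factorial * Real.exp (-lam)) *
        ∑ f ∈ (Finset.Nat.antidiagonalTuple k n).filter (fun f => ∀ i, 1 ≤ f i),
          ∏ ℓ, (lam * f ℓ) ^ (f ℓ - 1) / (f ℓ).factorial * Real.exp (-(lam * f ℓ)) :=
  stmt3_general lam n hn
end

section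
/- Let λ ∈ (0,1] and m ≥ 1. The m-fold convolution of the Borel distribution with parameter λ is the Borel–Tanner distribution: for all n ≥ m, ∑ over m-tuples (n_1,...,n_m) of positive integers with n_1+⋯+n_m = n of ∏_{ℓ=1}^m (λ n_ℓ)^{n_ℓ-1}/n_ℓ! · e^{-λ n_ℓ} equals m·(λn)^{n-m}/(n·(n-m)!) · e^{-λn}. -/
/-!
Write `a_x(n) = x (x + n)^(n-1) / n!` (with `a_x(0) = 1`) for the normalized Abel polynomials.
The Borel weight of `k = j + 1` is `a_1(j)` and the Borel–Tanner weight of `n = m + p` is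
`a_m(p)`, after factoring out `λ^(n-m) e^(-λn)`. Abel's identity says that `x ↦ a_x` is of
binomial type, `a_(x+y)(p) = ∑_(i+j=p) a_x(i) a_y(j)`, so summing over compositions of `n - m`
into `m` parts gives `a_(1+⋯+1) = a_m`.
-/

open Finset Nat

theorem Finset.Nat.sum_antidiagonalTuple_succ {M : Type*} [AddCommMonoid M] (k n : ℕ)
    (g : (Fin (k + 1) → ℕ) → M) :
    ∑ f ∈ antidiagonalTuple (k + 1) n, g f =
      ∑ ij ∈ antidiagonal n, ∑ f ∈ antidiagonalTuple k ij.2, g (Fin.cons ij.1 f) := by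
  change _ = (Multiset.map _ (List.Nat.antidiagonal n : Multiset (ℕ × ℕ))).sum
  simp only [Finset.sum, antidiagonalTuple, Multiset.Nat.antidiagonalTuple,
    List.Nat.antidiagonalTuple, Multiset.map_coe, Multiset.sum_coe, List.flatMap_def,
    List.map_flatten, List.sum_flatten, List.map_map]
  simp [Function.comp_def]

theorem Finset.Nat.sum_filter_one_le_antidiagonalTuple {M : Type*} [AddCommMonoid M] {m n : ℕ}
    (h : m ≤ n) (G : (Fin m → ℕ) → M) :
    ∑ f ∈ (antidiagonalTuple m n).filter (fun f => ∀ i, 1 ≤ f i), G f =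
      ∑ g ∈ antidiagonalTuple m (n - m), G (g + 1) := by
  refine sum_nbij' (· - 1) (· + 1) ?_ ?_ ?_ ?_ ?_
  · intro f hf
    rw [mem_filter, mem_antidiagonalTuple] at hf
    simp only [mem_antidiagonalTuple, Pi.sub_apply, Pi.one_apply]
    rw [sum_tsub_distrib _ fun i _ => hf.2 i]
    simp [hf.1]
  · intro g hg
    rw [mem_antidiagonalTuple] at hg
    simp [mem_antidiagonalTuple, sum_add_distrib, hg, h]
  · intro f hf
    rw [mem_filter] at hf
    funext i
    simpa using Nat.sub_add_cancel (hf.2 i)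
  · intro g _
    simp
  · intro f hf
    rw [mem_filter] at hf
    congr
    funext i
    simpa using (Nat.sub_add_cancel (hf.2 i)).symm

section Abel

variable {K : Type*} [Field K]

def abelCoeff (x : K) : ℕ → K
  | 0 => 1
  | n + 1 => x * (x + (n + 1)) ^ n / (n + 1)!

def shiftPowCoeff (y : K) (n : ℕ) : K := (y + n) ^ n / n !

@[simp]
theorem abelCoeff_zero (x : K) : abelCoeff x 0 = 1 := rfl

theorem abelCoeff_succ (x : K) (n : ℕ) :
    abelCoeff x (n + 1) = x * (x + (n + 1)) ^ n / (n + 1)! := rfl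

@[simp]
theorem shiftPowCoeff_zero (y : K) : shiftPowCoeff y 0 = 1 := by
  simp [shiftPowCoeff]

theorem shiftPowCoeff_succ [CharZero K] (y : K) (n : ℕ) :
    shiftPowCoeff y (n + 1) = abelCoeff y (n + 1) + shiftPowCoeff (y + 1) n := by
  simp only [shiftPowCoeff, abelCoeff_succ, factorial_succ, cast_mul, cast_add, cast_one,
    pow_succ]
  field_simp
  ring

theorem succ_mul_abelCoeff_succ [CharZero K] (x : K) (n : ℕ) :
    (n + 1 : K) * abelCoeff x (n + 1) = x * shiftPowCoeff (x + 1) n := by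
  simp only [shiftPowCoeff, abelCoeff_succ, factorial_succ, cast_mul, cast_add, cast_one]
  field_simp
  ring

theorem abelCoeff_eq_div [CharZero K] {x : K} {n : ℕ} (hx : x + n ≠ 0) :
    abelCoeff x n = x * (x + n) ^ n / ((x + n) * n !) := by
  cases n with
  | zero => simp_all
  | succ n =>
    rw [abelCoeff_succ, pow_succ]
    push_cast at hx ⊢
    field_simp

theorem abelCoeff_add_succ_of_sum_shiftPowCoeff [CharZero K] (p : ℕ)
    (hF : ∀ x y : K, ∑ ij ∈ antidiagonal p, abelCoeff x ij.1 * shiftPowCoeff y ij.2 =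
      shiftPowCoeff (x + y) p) (x y : K) :
    ∑ ij ∈ antidiagonal (p + 1), abelCoeff x ij.1 * abelCoeff y ij.2 =
      abelCoeff (x + y) (p + 1) := by
  have weighted : ∀ x y : K, ∑ ij ∈ antidiagonal (p + 1),
      (ij.1 : K) * (abelCoeff x ij.1 * abelCoeff y ij.2) = x * shiftPowCoeff (x + y + 1) p := by
    intro x y
    calc _ = ∑ ij ∈ antidiagonal p, x * (abelCoeff y ij.2 * shiftPowCoeff (x + 1) ij.1) := by
          rw [sum_antidiagonal_succ]
          simp only [cast_zero, zero_mul, zero_add, cast_succ, ← mul_assoc,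
            succ_mul_abelCoeff_succ]
          exact sum_congr rfl fun _ _ => by ring
      _ = x * shiftPowCoeff (y + (x + 1)) p := by
          rw [← mul_sum, ← hF, ← sum_antidiagonal_swap]
          simp only [Prod.fst_swap, Prod.snd_swap]
      _ = x * shiftPowCoeff (x + y + 1) p := by ring_nf
  have weighted' : ∑ ij ∈ antidiagonal (p + 1),
      (ij.2 : K) * (abelCoeff x ij.1 * abelCoeff y ij.2) = y * shiftPowCoeff (x + y + 1) p := by
    rw [← sum_antidiagonal_swap, add_comm x y, ← weighted y x]
    simp only [Prod.fst_swap, Prod.snd_swap, mul_comm (abelCoeff x _)]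
  -- Multiplying by `p + 1 = i + j` splits the sum into two sums, each an instance of `hF`.
  apply mul_left_cancel₀ (cast_add_one_ne_zero p : (p + 1 : K) ≠ 0)
  calc (p + 1 : K) * ∑ ij ∈ antidiagonal (p + 1), abelCoeff x ij.1 * abelCoeff y ij.2
      = ∑ ij ∈ antidiagonal (p + 1),
          ((ij.1 : K) + ij.2) * (abelCoeff x ij.1 * abelCoeff y ij.2) := by
        rw [mul_sum]
        refine sum_congr rfl fun ij hij => ?_
        rw [← cast_add, mem_antidiagonal.mp hij, cast_succ]
    _ = (x + y) * shiftPowCoeff (x + y + 1) p := by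
        rw [sum_congr rfl fun _ _ => add_mul _ _ _, sum_add_distrib, weighted, weighted', add_mul]
    _ = (p + 1 : K) * abelCoeff (x + y) (p + 1) := (succ_mul_abelCoeff_succ _ _).symm

theorem sum_abelCoeff_mul_shiftPowCoeff [CharZero K] (p : ℕ) (x y : K) :
    ∑ ij ∈ antidiagonal p, abelCoeff x ij.1 * shiftPowCoeff y ij.2 =
      shiftPowCoeff (x + y) p := by
  induction p generalizing x y with
  | zero => simp
  | succ p ih =>
    have hsym := abelCoeff_add_succ_of_sum_shiftPowCoeff p ih x y
    rw [sum_antidiagonal_succ'] at hsym ⊢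
    simp only [shiftPowCoeff_zero, abelCoeff_zero, mul_one, shiftPowCoeff_succ, mul_add,
      sum_add_distrib, ih] at hsym ⊢
    rw [← add_assoc, hsym, add_assoc x y 1]

theorem abelCoeff_add [CharZero K] (x y : K) (p : ℕ) :
    abelCoeff (x + y) p = ∑ ij ∈ antidiagonal p, abelCoeff x ij.1 * abelCoeff y ij.2 := by
  cases p with
  | zero => simp
  | succ p =>
    exact (abelCoeff_add_succ_of_sum_shiftPowCoeff p (sum_abelCoeff_mul_shiftPowCoeff p) x y).symm

theorem sum_antidiagonalTuple_prod_abelCoeff [CharZero K] {m : ℕ} (x : Fin m → K) (p : ℕ) :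
    ∑ f ∈ antidiagonalTuple m p, ∏ ℓ, abelCoeff (x ℓ) (f ℓ) =
      abelCoeff (∑ ℓ, x ℓ) p := by
  induction m generalizing p with
  | zero => cases p <;> simp [abelCoeff_succ]
  | succ m ih =>
    rw [sum_antidiagonalTuple_succ, Fin.sum_univ_succ, abelCoeff_add]
    refine sum_congr rfl fun ij _ => ?_
    simp only [Fin.prod_univ_succ, Fin.cons_zero, Fin.cons_succ]
    rw [← mul_sum, ih]

theorem abelCoeff_natCast_sub [CharZero K] {m n : ℕ} (hn0 : n ≠ 0) (hn : m ≤ n) :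
    abelCoeff (m : K) (n - m) = m * (n : K) ^ (n - m) / (n * (n - m)!) := by
  have hcast : (m : K) + (n - m : ℕ) = n := by rw [← cast_add, Nat.add_sub_cancel' hn]
  rw [abelCoeff_eq_div (by rw [hcast]; exact cast_ne_zero.mpr hn0), hcast]

end Abel

noncomputable def borelMass (lam : ℝ) (k : ℕ) : ℝ :=
  (lam * k) ^ (k - 1) / k ! * Real.exp (-(lam * k))

theorem borelMass_succ (lam : ℝ) (j : ℕ) :
    borelMass lam (j + 1) = lam ^ j * Real.exp (-(lam * (j + 1 : ℕ))) * abelCoeff 1 j := by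
  rw [borelMass, abelCoeff_eq_div (by positivity), Nat.add_sub_cancel, mul_pow, factorial_succ]
  push_cast
  field_simp
  ring

theorem stmt4_general (lam : ℝ) (m n : ℕ) (hm : 1 ≤ m) (hn : m ≤ n) :
    ∑ f ∈ (Finset.Nat.antidiagonalTuple m n).filter (fun f => ∀ i, 1 ≤ f i),
      ∏ ℓ, (lam * f ℓ) ^ (f ℓ - 1) / (f ℓ).factorial * Real.exp (-(lam * f ℓ))
    = m * (lam * n) ^ (n - m) / (n * (n - m).factorial) * Real.exp (-(lam * n)) := by
  change ∑ f ∈ (antidiagonalTuple m n).filter (fun f => ∀ i, 1 ≤ f i),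
    ∏ ℓ, borelMass lam (f ℓ) = _
  have factor : ∀ g ∈ antidiagonalTuple m (n - m), ∏ ℓ, borelMass lam ((g + 1) ℓ) =
      lam ^ (n - m) * Real.exp (-(lam * n)) * ∏ ℓ, abelCoeff 1 (g ℓ) := by
    intro g hg
    rw [mem_antidiagonalTuple] at hg
    have hsum : ∑ ℓ, (g ℓ + 1) = n := by
      rw [sum_add_distrib, hg]
      simp [Nat.sub_add_cancel hn]
    simp only [Pi.add_apply, Pi.one_apply, borelMass_succ, prod_mul_distrib, prod_pow_eq_pow_sum,
      hg, ← Real.exp_sum, ← mul_sum, sum_neg_distrib, ← cast_sum, hsum]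
  rw [sum_filter_one_le_antidiagonalTuple hn, sum_congr rfl factor, ← mul_sum,
    sum_antidiagonalTuple_prod_abelCoeff (fun _ => (1 : ℝ))]
  simp only [Fin.sum_const, nsmul_eq_mul, mul_one]
  rw [abelCoeff_natCast_sub (by omega) hn, mul_pow]
  ring

theorem stmt4 (lam : ℝ) (h0 : 0 < lam) (h1 : lam ≤ 1) (m n : ℕ) (hm : 1 ≤ m) (hn : m ≤ n) :
    ∑ f ∈ (Finset.Nat.antidiagonalTuple m n).filter (fun f => ∀ i, 1 ≤ f i),
      ∏ ℓ, (lam * f ℓ) ^ (f ℓ - 1) / (f ℓ).factorial * Real.exp (-(lam * f ℓ))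
    = m * (lam * n) ^ (n - m) / (n * (n - m).factorial) * Real.exp (-(lam * n)) :=
  stmt4_general lam m n hm hn
end

section
/- For θ > 0 and λ ∈ (0,1), the sequence p_{SU}(n) = (1-λ)(θ+λn)^n/n! · e^{-(θ+λn)}, n ∈ ℕ₀, defines a probability distribution: ∑_{n=0}^∞ (1-λ)(θ+λn)^n/n! · e^{-(θ+λn)} = 1. -/
/-!
Put `x = λ e^{-λ}` and `a = θ / λ`; the sum is `(1 - λ) e^{-θ} G(a)` with
`G(b) = ∑ (b + n)^n x^n / n!`. The Abel polynomials `a (a + n)^(n-1)` are of binomial type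
(differentiate in `a` and induct), so the Cauchy product of exponential generating functions gives
`A(a + b) = A(a) A(b)` and `A(a) G(b) = G(a + b)` for `A(a) = ∑ a (a + n)^(n-1) x^n / n!`.
Termwise `A(s) ≥ 1 + κ s` near `0` with `κ = x A(1)`, and a multiplicative function lying above a
line through `(0, 1)` is `exp (κ s)`; hence `κ = x e^κ`. Shifting the index,
`G(0) = 1 + x G(1) = 1 + κ G(0)`, so `κ < 1` and `G(b) = e^{κ b} / (1 - κ)`. The equation
`t = x e^t` has only one root below `1`, which is `λ`.
-/

open Finset Real Filter Topology
open scoped Nat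

/-- `abelPoly a n = a (a + n)^(n-1)`, with the value `1` at `n = 0` given separately. -/
noncomputable def abelPoly (a : ℝ) : ℕ → ℝ
  | 0 => 1
  | n + 1 => a * (a + (n + 1)) ^ n

lemma abs_abelPoly_le (a : ℝ) (n : ℕ) : |abelPoly a n| ≤ (|a| + n) ^ n := by
  cases n with
  | zero => simp [abelPoly]
  | succ n =>
    have h : |a + (n + 1)| ≤ |a| + (n + 1) :=
      (abs_add_le _ _).trans_eq (by rw [abs_of_nonneg (by positivity : (0 : ℝ) ≤ n + 1)])
    rw [abelPoly, abs_mul, abs_pow, pow_succ', Nat.cast_succ]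
    exact mul_le_mul (le_add_of_nonneg_right (by positivity))
      (pow_le_pow_left₀ (abs_nonneg _) h n) (by positivity) (by positivity)

lemma abelPoly_one (n : ℕ) : abelPoly 1 n = ((n : ℝ) + 1) ^ n / (n + 1) := by
  cases n with
  | zero => simp [abelPoly]
  | succ n =>
    simp only [abelPoly, Nat.cast_succ, one_mul]
    field_simp
    ring

lemma hasDerivAt_abelPoly (n : ℕ) (a : ℝ) :
    HasDerivAt (fun a => abelPoly a (n + 1)) ((n + 1) * abelPoly (a + 1) n) a := by
  cases n with
  | zero => simpa [abelPoly] using hasDerivAt_id' a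
  | succ n =>
    refine ((hasDerivAt_id' a).fun_mul
      (((hasDerivAt_id' a).add_const _).fun_pow (n + 1))).congr_deriv ?_
    simp only [abelPoly, Nat.cast_succ, Nat.add_sub_cancel]
    ring

theorem sum_antidiagonal_choose_abelPoly_mul {γ : ℕ → ℝ → ℝ} (hγ₀ : ∀ t, γ 0 t = 1)
    (hγ : ∀ n t, HasDerivAt (γ (n + 1)) ((n + 1) * γ n (t + 1)) t) (n : ℕ) (a b : ℝ) :
    ∑ p ∈ antidiagonal n, (n.choose p.1 : ℝ) * abelPoly a p.1 * γ p.2 b = γ n (a + b) := by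
  induction n generalizing a with
  | zero => simp [abelPoly, hγ₀]
  | succ n ih =>
    set F : ℝ → ℝ := fun a =>
      ∑ p ∈ antidiagonal n, ((n + 1).choose (p.1 + 1) : ℝ) * abelPoly a (p.1 + 1) * γ p.2 b
    have hF : ∀ a, HasDerivAt F ((n + 1) * γ n (a + 1 + b)) a := by
      intro a
      rw [← ih (a + 1), mul_sum]
      refine (HasDerivAt.fun_sum fun p _ => ((hasDerivAt_abelPoly p.1 a).const_mul
        ((n + 1).choose (p.1 + 1) : ℝ)).mul_const (γ p.2 b)).congr_deriv
        (sum_congr rfl fun p _ => ?_)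
      have hchoose : ((n + 1 : ℕ) : ℝ) * n.choose p.1 =
          (n + 1).choose (p.1 + 1) * (p.1 + 1 : ℕ) := by
        exact_mod_cast Nat.add_one_mul_choose_eq n p.1
      push_cast at hchoose
      linear_combination -(abelPoly (a + 1) p.1 * γ p.2 b) * hchoose
    have hF₀ : F 0 = 0 := sum_eq_zero fun p _ => by simp [abelPoly]
    have hconst : ∀ a, F a - γ (n + 1) (a + b) = F 0 - γ (n + 1) (0 + b) := by
      have hd : ∀ a, HasDerivAt (fun a => F a - γ (n + 1) (a + b)) 0 a := fun a => by
        refine ((hF a).fun_sub ((hγ n (a + b)).comp_add_const a b)).congr_deriv ?_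
        rw [add_right_comm a 1 b, sub_self]
      exact fun a => is_const_of_deriv_eq_zero (fun a => (hd a).differentiableAt)
        (fun a => (hd a).deriv) a 0
    rw [Nat.sum_antidiagonal_succ]
    change ((n + 1).choose 0 : ℝ) * abelPoly a 0 * γ (n + 1) b + F a = γ (n + 1) (a + b)
    rw [zero_add] at hconst
    simp only [Nat.choose_zero_right, Nat.cast_one, abelPoly, one_mul]
    linear_combination hconst a + hF₀

noncomputable def egf (c : ℕ → ℝ) (x : ℝ) : ℝ := ∑' n, c n * x ^ n / n !

lemma summable_norm_egf {c : ℕ → ℝ} {r x : ℝ} (hr : 0 ≤ r) (hc : ∀ n, |c n| ≤ (r + n) ^ n)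
    (hx : exp 1 * |x| < 1) : Summable fun n => ‖c n * x ^ n / (n !)‖ := by
  refine .of_nonneg_of_le (fun n => norm_nonneg _) (fun n => ?_)
    ((summable_geometric_of_lt_one (by positivity) hx).mul_left (exp r))
  calc ‖c n * x ^ n / (n !)‖ = |c n| * |x| ^ n / n ! := by
        rw [Real.norm_eq_abs, abs_div, abs_mul, abs_pow, Nat.abs_cast]
    _ ≤ (r + n) ^ n / n ! * |x| ^ n := by
        rw [div_mul_eq_mul_div₀]
        gcongr
        exact hc n
    _ ≤ exp (r + n) * |x| ^ n := by
        gcongr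
        exact pow_div_factorial_le_exp (x := r + n) (by positivity) n
    _ = exp r * (exp 1 * |x|) ^ n := by rw [exp_add, mul_pow, ← exp_nat_mul, mul_one]; ring

lemma egf_mul {a b : ℕ → ℝ} {x : ℝ} (ha : Summable fun n => ‖a n * x ^ n / (n !)‖)
    (hb : Summable fun n => ‖b n * x ^ n / (n !)‖) :
    egf a x * egf b x =
      egf (fun n => ∑ p ∈ antidiagonal n, (n.choose p.1 : ℝ) * a p.1 * b p.2) x := by
  rw [egf, egf, tsum_mul_tsum_eq_tsum_sum_antidiagonal_of_summable_norm ha hb, egf]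
  refine tsum_congr fun n => ?_
  rw [sum_mul, sum_div]
  refine sum_congr rfl fun p hp => ?_
  obtain ⟨i, j⟩ := p
  rw [HasAntidiagonal.mem_antidiagonal] at hp
  subst hp
  have h : ((i + j).choose i * i ! * j ! : ℝ) = (i + j)! := by
    rw [Nat.choose_symm_add]
    exact_mod_cast Nat.add_choose_mul_factorial_mul_factorial i j
  have hchoose : ((i + j).choose i : ℝ) ≠ 0 :=
    Nat.cast_ne_zero.2 (Nat.choose_pos (Nat.le_add_right i j)).ne'
  rw [← h, pow_add]
  field_simp

theorem eq_exp_of_map_add_of_one_add_mul_le {f : ℝ → ℝ} {T : ℝ}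
    (hmul : ∀ a b, f (a + b) = f a * f b) (hle : ∀ᶠ s in 𝓝 0, 1 + T * s ≤ f s) (s : ℝ) :
    f s = exp (T * s) := by
  have hf₀ : f 0 = 1 := by
    have h1 : 1 ≤ f 0 := by simpa using hle.self_of_nhds
    have h2 : f 0 = f 0 * f 0 := by simpa using hmul 0 0
    nlinarith
  have hpow : ∀ (m : ℕ) u, f (m * u) = f u ^ m := by
    intro m u
    induction m with
    | zero => simp [hf₀]
    | succ m ih => rw [Nat.cast_succ, add_one_mul, hmul, ih, pow_succ]
  have hge : ∀ s, exp (T * s) ≤ f s := by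
    intro s
    have hs : Tendsto (fun m : ℕ => s / m) atTop (𝓝 0) :=
      tendsto_const_div_atTop_nhds_zero_nat s
    have hpos : ∀ᶠ m : ℕ in atTop, 0 ≤ 1 + T * (s / m) := by
      have : Tendsto (fun m : ℕ => 1 + T * (s / m)) atTop (𝓝 1) := by
        simpa using (hs.const_mul T).const_add 1
      exact this.eventually (eventually_ge_nhds one_pos)
    refine le_of_tendsto (tendsto_one_add_div_pow_exp (T * s)) ?_
    filter_upwards [hs.eventually hle, hpos, eventually_ne_atTop 0] with m hm hm₀ hm₁
    calc (1 + T * s / m) ^ m = (1 + T * (s / m)) ^ m := by rw [mul_div_assoc]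
      _ ≤ f (s / m) ^ m := pow_le_pow_left₀ hm₀ hm m
      _ = f s := by rw [← hpow, mul_div_cancel₀ _ (Nat.cast_ne_zero.2 hm₁)]
  have hinv : f s * f (-s) = 1 := by rw [← hmul, add_neg_cancel, hf₀]
  have h1 := hge (-s)
  rw [mul_neg, exp_neg] at h1
  refine le_antisymm ?_ (hge s)
  rw [eq_inv_of_mul_eq_one_left hinv]
  simpa using inv_anti₀ (inv_pos.2 (exp_pos _)) h1

theorem eq_of_eq_mul_exp_of_lt_one {x a b : ℝ} (ha : a = x * exp a) (hb : b = x * exp b)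
    (ha₁ : a < 1) (hb₁ : b < 1) : a = b := by
  wlog hab : a < b generalizing a b
  · rcases (not_lt.1 hab).lt_or_eq with h | h
    · exact (this hb ha hb₁ ha₁ h).symm
    · exact h.symm
  have hE : exp (-(b - a)) < 1 := exp_lt_one_iff.2 (by linarith)
  have hE' : 1 - (b - a) ≤ exp (-(b - a)) := by linarith [add_one_le_exp (-(b - a))]
  have hab' : a = b * exp (-(b - a)) := by
    calc a = x * exp b * exp (-(b - a)) := by
          rw [mul_assoc, ← exp_add, show b + -(b - a) = a by ring, ← ha]
      _ = b * exp (-(b - a)) := by rw [← hb]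
  -- `b - a = b (1 - e^{-(b-a)}) < 1 - e^{-(b-a)} ≤ b - a`
  nlinarith [mul_lt_mul_of_pos_right hb₁ (sub_pos.2 hE)]

lemma exp_one_mul_mul_exp_neg_lt_one {t : ℝ} (ht : t < 1) : exp 1 * (t * exp (-t)) < 1 := by
  have h : t < exp (t - 1) := by linarith [add_one_lt_exp (sub_ne_zero.2 ht.ne)]
  calc exp 1 * (t * exp (-t)) = t * exp (-(t - 1)) := by
        rw [mul_left_comm, ← exp_add]
        ring_nf
    _ < exp (t - 1) * exp (-(t - 1)) := mul_lt_mul_of_pos_right h (exp_pos _)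
    _ = 1 := by rw [← exp_add, add_neg_cancel, exp_zero]

section AbelSeries

variable {x : ℝ}

lemma summable_norm_egf_abelPoly (hx : exp 1 * |x| < 1) (a : ℝ) :
    Summable fun n => ‖abelPoly a n * x ^ n / (n !)‖ :=
  summable_norm_egf (abs_nonneg a) (abs_abelPoly_le a) hx

lemma summable_norm_egf_add_pow_self (hx : exp 1 * |x| < 1) (b : ℝ) :
    Summable fun n => ‖(b + n) ^ n * x ^ n / (n !)‖ :=
  summable_norm_egf (abs_nonneg b) (fun n => by
    rw [abs_pow]
    exact pow_le_pow_left₀ (abs_nonneg _) ((abs_add_le _ _).trans_eq (by rw [Nat.abs_cast])) n)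
    hx

lemma egf_abelPoly_mul {γ : ℕ → ℝ → ℝ} (hγ₀ : ∀ t, γ 0 t = 1)
    (hγ : ∀ n t, HasDerivAt (γ (n + 1)) ((n + 1) * γ n (t + 1)) t) (hx : exp 1 * |x| < 1)
    {b : ℝ} (hb : Summable fun n => ‖γ n b * x ^ n / (n !)‖) (a : ℝ) :
    egf (abelPoly a) x * egf (fun n => γ n b) x = egf (fun n => γ n (a + b)) x := by
  simp_rw [egf_mul (summable_norm_egf_abelPoly hx a) hb,
    sum_antidiagonal_choose_abelPoly_mul hγ₀ hγ]

lemma egf_abelPoly_add (hx : exp 1 * |x| < 1) (a b : ℝ) :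
    egf (abelPoly (a + b)) x = egf (abelPoly a) x * egf (abelPoly b) x :=
  (egf_abelPoly_mul (γ := fun n t => abelPoly t n) (fun _ => rfl) hasDerivAt_abelPoly hx
    (summable_norm_egf_abelPoly hx b) a).symm

lemma egf_abelPoly_mul_egf_add_pow_self (hx : exp 1 * |x| < 1) (a b : ℝ) :
    egf (abelPoly a) x * egf (fun n => (b + n) ^ n) x = egf (fun n => (a + b + n) ^ n) x := by
  refine egf_abelPoly_mul (γ := fun n t => (t + n) ^ n) (fun _ => pow_zero _) (fun n t => ?_) hx
    (summable_norm_egf_add_pow_self hx b) a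
  refine (((hasDerivAt_id' t).add_const _).fun_pow (n + 1)).congr_deriv ?_
  push_cast
  ring

lemma egf_zero_add_pow_self_eq_one_add (hx : exp 1 * |x| < 1) :
    egf (fun n => ((0 : ℝ) + n) ^ n) x = 1 + x * egf (fun n => (1 + n) ^ n) x := by
  rw [egf, (summable_norm_egf_add_pow_self hx 0).of_norm.tsum_eq_zero_add, egf, ← tsum_mul_left]
  congr 1
  · simp
  refine tsum_congr fun n => ?_
  rw [Nat.factorial_succ]
  push_cast
  field_simp
  ring

lemma one_add_mul_le_egf_abelPoly (hx₀ : 0 ≤ x) (hx : exp 1 * |x| < 1) {s : ℝ}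
    (hs : -1 ≤ s) : 1 + x * egf (abelPoly 1) x * s ≤ egf (abelPoly s) x := by
  have hsum := fun a => (summable_norm_egf_abelPoly hx a).of_norm
  rw [egf, egf, (hsum s).tsum_eq_zero_add, ← tsum_mul_left, ← tsum_mul_right]
  refine add_le_add (by simp [abelPoly]) (Summable.tsum_le_tsum (fun n => ?_)
    (((hsum 1).mul_left x).mul_right s) ((summable_nat_add_iff 1).2 (hsum s)))
  have hpow : s * ((n : ℝ) + 1) ^ n ≤ s * (s + (n + 1)) ^ n := by
    rcases le_total 0 s with h | h
    · exact mul_le_mul_of_nonneg_left (pow_le_pow_left₀ (by positivity) (by linarith) n) h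
    · have : (0 : ℝ) ≤ n := n.cast_nonneg
      exact mul_le_mul_of_nonpos_left (pow_le_pow_left₀ (by linarith) (by linarith) n) h
  calc x * (abelPoly 1 n * x ^ n / n !) * s
        = s * ((n : ℝ) + 1) ^ n * x ^ (n + 1) / (n + 1)! := by
        rw [abelPoly_one, Nat.factorial_succ]
        push_cast
        field_simp
        ring
    _ ≤ s * (s + (n + 1)) ^ n * x ^ (n + 1) / (n + 1)! := by gcongr
    _ = abelPoly s (n + 1) * x ^ (n + 1) / (n + 1)! := rfl

lemma egf_abelPoly_eq_exp (hx₀ : 0 ≤ x) (hx : exp 1 * |x| < 1) (s : ℝ) :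
    egf (abelPoly s) x = exp (x * egf (abelPoly 1) x * s) :=
  eq_exp_of_map_add_of_one_add_mul_le (egf_abelPoly_add hx)
    (eventually_ge_nhds (by norm_num : (-1 : ℝ) < 0) |>.mono fun _ hs =>
      one_add_mul_le_egf_abelPoly hx₀ hx hs) s

end AbelSeries

theorem egf_add_pow_self_mul_exp_neg {lam : ℝ} (h₀ : 0 ≤ lam) (h₁ : lam < 1) (b : ℝ) :
    egf (fun n => (b + n) ^ n) (lam * exp (-lam)) = exp (lam * b) / (1 - lam) := by
  set x := lam * exp (-lam) with hx_def
  have hx₀ : 0 ≤ x := by positivity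
  have hx : exp 1 * |x| < 1 := by
    rw [abs_of_nonneg hx₀]
    exact exp_one_mul_mul_exp_neg_lt_one h₁
  set κ := x * egf (abelPoly 1) x
  have hA := egf_abelPoly_eq_exp hx₀ hx
  have hκ : κ = x * exp κ := by rw [← mul_one κ, ← hA 1, mul_one]
  have hG : ∀ b, egf (fun n => (b + n) ^ n) x =
      exp (κ * b) * egf (fun n => ((0 : ℝ) + n) ^ n) x := fun b => by
    rw [← hA, egf_abelPoly_mul_egf_add_pow_self hx, add_zero]
  have hG₀ : egf (fun n => ((0 : ℝ) + n) ^ n) x * (1 - κ) = 1 := by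
    have h := egf_zero_add_pow_self_eq_one_add hx
    rw [hG 1, mul_one] at h
    linear_combination h - egf (fun n => ((0 : ℝ) + n) ^ n) x * hκ
  have hG₀_nonneg : 0 ≤ egf (fun n => ((0 : ℝ) + n) ^ n) x :=
    tsum_nonneg fun n => by positivity
  have hκ₁ : κ < 1 := by
    by_contra! h
    nlinarith
  have hκ_eq : κ = lam := eq_of_eq_mul_exp_of_lt_one hκ (by rw [hx_def, mul_assoc, ← exp_add,
    neg_add_cancel, exp_zero, mul_one]) hκ₁ h₁
  rw [hG b, hκ_eq, eq_div_iff (sub_ne_zero.2 h₁.ne'), mul_assoc, ← hκ_eq, hG₀, mul_one]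

theorem stmt8_general (θ lam : ℝ) (hlam : lam ∈ Set.Ioo (0 : ℝ) 1) :
    ∑' n : ℕ, (1 - lam) * (θ + lam * n) ^ n / n.factorial * Real.exp (-(θ + lam * n))
    = 1 := by
  obtain ⟨h₀, h₁⟩ := hlam
  have hterm : ∀ n : ℕ, (1 - lam) * (θ + lam * n) ^ n / n ! * exp (-(θ + lam * n)) =
      (1 - lam) * exp (-θ) * ((θ / lam + n) ^ n * (lam * exp (-lam)) ^ n / n !) := by
    intro n
    have hsplit : θ + lam * n = lam * (θ / lam + n) := by field_simp
    have hexp : exp (-(θ + lam * n)) = exp (-θ) * exp (-lam) ^ n := by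
      rw [← exp_nat_mul, ← exp_add]
      ring_nf
    rw [hexp, hsplit, mul_pow, mul_pow]
    ring
  rw [tsum_congr hterm, tsum_mul_left, ← egf, egf_add_pow_self_mul_exp_neg h₀.le h₁,
    mul_div_cancel₀ θ h₀.ne', exp_neg]
  field_simp [sub_ne_zero.2 h₁.ne']

theorem stmt8 (θ lam : ℝ) (hθ : 0 < θ) (hlam : lam ∈ Set.Ioo (0 : ℝ) 1) :
    ∑' n : ℕ, (1 - lam) * (θ + lam * n) ^ n / n.factorial * Real.exp (-(θ + lam * n))
    = 1 :=
  stmt8_general θ lam hlam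
end
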